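/- Consider the covariate-dependent two-groups model with Π the class of functions (x₁,x₂) ↦ g(β₀ + β₁ᵀx₁ + β₂ᵀx₂) with g the logistic function t ↦ (1+e^{−t})⁻¹ or g = Φ, and ℱ equal to ℱ_Gauss or ℱ_↓. Suppose 𝒳 = 𝒳₁ × 𝒳₂ with 𝒳₁ ⊆ ℝ^{p₁}, 𝒳₂ ⊆ ℝ^{p₂}, the marginal m₁ of m on 𝒳₁ is supported on a non-empty countable set, and there exist x̃₁ ∈ 𝒳₁ with m₁({x̃₁}) > 0 and a non-empty open set 𝒳₂' ⊆ 𝒳₂ such that the conditional distribution m_{2|1}(·, x̃₁) assigns strictly positive probability to every open ball contained in 𝒳₂'. If F₀ ≠ F₁*, F₁* ∈ ℱ, and π*(x₁,x₂) = g(β₀* + (β₁*)ᵀx₁ + (β₂*)ᵀx₂) with β₂* ≠ 0, then P_{(π*, F₁*)} is identifiable. -/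

import Mathlib

/-!
Equality of the joint laws on the rectangles `A × (-∞, y]` forces
`π*(x) (F₁*(y) - F₀(y)) = π(x) (F₁(y) - F₀(y))` for `m`-a.e. `x` and every `y`. Since `F₁* ≠ F₀`,
this gives one constant `k > 0` with `π = k π*` a.e. and `F₁* - F₀ = k (F₁ - F₀)`. Because `x̃₁` is
an atom, `π(x̃₁, ·) = k π*(x̃₁, ·)` holds a.e. for the conditional law of `X₂`, which charges every
ball of `𝒳₂'`, so by continuity it holds on all of `𝒳₂'`. Moving from a point of `𝒳₂'` in the
direction `β₂*` yields `g(u + s t) = k g(v + ‖β₂*‖² t)` for `t` near `0`; differentiating this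
identity a few times shows that for the logistic and the probit link it forces `k = 1`.
-/

open MeasureTheory ProbabilityTheory

noncomputable section

/-- The standard normal distribution function `Φ`. -/
def stdNormalCDF (y : ℝ) : ℝ := ((gaussianReal 0 1) (Set.Iic y)).toReal

/-- `F` belongs to the class `ℱ_Gauss` of Gaussian location mixtures:
`F(y) = ∫ Φ(y - u) dG(u)` for some probability measure `G` on `ℝ`. -/
def IsGaussMixCDF (F : ℝ → ℝ) : Prop :=
  ∃ G : Measure ℝ, IsProbabilityMeasure G ∧ ∀ y : ℝ, F y = ∫ u, stdNormalCDF (y - u) ∂G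

/-- `F` belongs to the class `ℱ_↓` of distribution functions having a nonincreasing
density on `[0,1]` (and vanishing outside `[0,1]`). -/
def IsDecDensityDF (F : ℝ → ℝ) : Prop :=
  ∃ f : ℝ → ℝ, (∀ x, 0 ≤ f x) ∧ AntitoneOn f (Set.Icc 0 1) ∧
    (∀ x, x ∉ Set.Icc (0:ℝ) 1 → f x = 0) ∧ (∫ t, f t = 1) ∧
    ∀ y : ℝ, F y = ∫ t in Set.Iic y, f t

/-- Equality of the joint distributions `P_{π₁,F₁}` and `P_{π₂,F₂}` of `(X, Y)` in the
covariate-dependent two-groups model with covariate distribution `m` and null distribution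
function `F0`: the measures of all rectangles `A × (-∞, y]` agree. -/
def JointEq {α : Type*} [MeasurableSpace α] (m : Measure α)
    (F0 : ℝ → ℝ) (π₁ : α → ℝ) (F₁ : ℝ → ℝ) (π₂ : α → ℝ) (F₂ : ℝ → ℝ) : Prop :=
  ∀ A : Set α, MeasurableSet A → ∀ y : ℝ,
    ∫ x in A, (π₁ x * F₁ y + (1 - π₁ x) * F0 y) ∂m
      = ∫ x in A, (π₂ x * F₂ y + (1 - π₂ x) * F0 y) ∂m

open Filter Topology Set Metric

theorem Continuous.eqOn_of_ae_eq_of_forall_ball_pos {X Y : Type*} [PseudoMetricSpace X]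
    [MeasurableSpace X] [TopologicalSpace Y] [T2Space Y] {μ : Measure X} {f g : X → Y}
    (hf : Continuous f) (hg : Continuous g) {U : Set X} (hU : IsOpen U)
    (hμ : ∀ z r, 0 < r → ball z r ⊆ U → 0 < μ (ball z r)) (h : f =ᵐ[μ] g) : EqOn f g U := by
  intro z hz
  by_contra hne
  obtain ⟨r, hr, hball⟩ := Metric.isOpen_iff.mp ((isOpen_ne_fun hf hg).inter hU) z ⟨hne, hz⟩
  have hnull : μ (ball z r) = 0 :=
    measure_mono_null (fun x hx => (hball hx).1) (ae_iff.mp h)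
  exact (hμ z r hr fun x hx => (hball hx).2).ne' hnull

theorem ae_condKernel_of_ae {α β : Type*} [MeasurableSpace α] [MeasurableSpace β]
    [StandardBorelSpace β] [Nonempty β] {ρ : Measure (α × β)} [IsFiniteMeasure ρ]
    {p : α × β → Prop} (h : ∀ᵐ x ∂ρ, p x) {a : α} (ha : ρ.fst {a} ≠ 0) :
    ∀ᵐ b ∂ρ.condKernel a, p (a, b) := by
  rw [← ρ.disintegrate ρ.condKernel] at h
  by_contra hna
  exact ha (measure_mono_null (singleton_subset_iff.mpr hna) (Measure.ae_ae_of_ae_compProd h))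

theorem JointEq.ae_mul_sub_eq {α : Type*} [MeasurableSpace α] {m : Measure α}
    [IsFiniteMeasure m] {F0 π₁ F₁ π₂ F₂} (h : JointEq m F0 π₁ F₁ π₂ F₂)
    (h₁ : Integrable π₁ m) (h₂ : Integrable π₂ m) (y : ℝ) :
    ∀ᵐ x ∂m, π₁ x * (F₁ y - F0 y) = π₂ x * (F₂ y - F0 y) := by
  have hint : ∀ π : α → ℝ, Integrable π m → ∀ F : ℝ → ℝ,
      Integrable (fun x => π x * F y + (1 - π x) * F0 y) m := fun π hπ F =>
    (hπ.mul_const _).add (((integrable_const 1).sub hπ).mul_const _)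
  filter_upwards [ae_eq_of_forall_setIntegral_eq_of_sigmaFinite
    (fun A _ _ => (hint π₁ h₁ F₁).integrableOn) (fun A _ _ => (hint π₂ h₂ F₂).integrableOn)
    (fun A hA _ => h A hA y)] with x hx
  linear_combination hx

theorem exists_pos_ae_eq_mul_of_ae_mul_eq {α : Type*} [MeasurableSpace α] {m : Measure α}
    [NeZero m] {π₁ π₂ : α → ℝ} {c d : ℝ → ℝ} (h₁ : ∀ x, 0 < π₁ x) (h₂ : ∀ x, 0 < π₂ x)
    (hc : c ≠ 0) (h : ∀ y, ∀ᵐ x ∂m, π₁ x * c y = π₂ x * d y) :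
    ∃ k, 0 < k ∧ (∀ᵐ x ∂m, π₂ x = k * π₁ x) ∧ ∀ y, c y = k * d y := by
  obtain ⟨y₀, hy₀⟩ : ∃ y₀, c y₀ ≠ 0 := by
    by_contra! h0
    exact hc (funext h0)
  obtain ⟨x₀, hx₀⟩ := (h y₀).exists
  have hd : d y₀ ≠ 0 := by
    rintro h0
    rw [h0, mul_zero] at hx₀
    exact hy₀ ((mul_eq_zero.mp hx₀).resolve_left (h₁ x₀).ne')
  have hk : ∀ᵐ x ∂m, π₂ x = c y₀ / d y₀ * π₁ x := by
    filter_upwards [h y₀] with x hx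
    field_simp
    linarith
  refine ⟨c y₀ / d y₀, ?_, hk, fun y => ?_⟩
  · obtain ⟨x, hx⟩ := hk.exists
    exact pos_of_mul_pos_left (hx ▸ h₂ x) (h₁ x).le
  · obtain ⟨x, hxy, hx⟩ := ((h y).and hk).exists
    rw [hx, mul_assoc] at hxy
    exact mul_left_cancel₀ (h₁ x).ne' (by linarith)

section Links

open Real

theorem eventuallyEq_of_hasDerivAt {f g f' g' : ℝ → ℝ} {t₀ : ℝ}
    (hf : ∀ t, HasDerivAt f (f' t) t) (hg : ∀ t, HasDerivAt g (g' t) t)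
    (h : f =ᶠ[𝓝 t₀] g) : f' =ᶠ[𝓝 t₀] g' :=
  h.eventually_nhds.mono fun t ht => (hf t).unique ((hg t).congr_of_eventuallyEq ht)

theorem hasDerivAt_comp_affine {F F' : ℝ → ℝ} (hF : ∀ x, HasDerivAt F (F' x) x) (c d t : ℝ) :
    HasDerivAt (fun t => F (c + d * t)) (d * F' (c + d * t)) t :=
  ((hF (c + d * t)).comp t (((hasDerivAt_id' t).const_mul d).const_add c)).congr_deriv
    (by ring)

theorem continuous_gaussianPDFReal_zero_one : Continuous (gaussianPDFReal 0 1) := by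
  rw [gaussianPDFReal_def]
  fun_prop

theorem hasDerivAt_gaussianPDFReal_zero_one (x : ℝ) :
    HasDerivAt (gaussianPDFReal 0 1) (-x * gaussianPDFReal 0 1 x) x := by
  have hφ : gaussianPDFReal 0 1 = fun x => (√(2 * π))⁻¹ * rexp (-x ^ 2 / 2) := by
    funext x
    simp [gaussianPDFReal]
  rw [hφ]
  refine (((hasDerivAt_pow 2 x).neg.div_const 2).exp.const_mul (√(2 * π))⁻¹).congr_deriv ?_
  simp only [Pi.neg_apply]
  ring

theorem stdNormalCDF_eq_integral (y : ℝ) :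
    stdNormalCDF y = ∫ x in Iic y, gaussianPDFReal 0 1 x := by
  rw [stdNormalCDF, gaussianReal_apply_eq_integral 0 one_ne_zero, ENNReal.toReal_ofReal]
  exact setIntegral_nonneg measurableSet_Iic fun x _ => gaussianPDFReal_nonneg 0 1 x

theorem hasDerivAt_stdNormalCDF (x : ℝ) :
    HasDerivAt stdNormalCDF (gaussianPDFReal 0 1 x) x := by
  have hφ := integrable_gaussianPDFReal 0 1
  have hΦ : stdNormalCDF = fun y => stdNormalCDF 0 + ∫ t in (0 : ℝ)..y, gaussianPDFReal 0 1 t := by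
    funext y
    rw [← intervalIntegral.integral_Iic_sub_Iic hφ.integrableOn hφ.integrableOn]
    simp only [stdNormalCDF_eq_integral]
    ring
  rw [hΦ]
  exact (intervalIntegral.integral_hasDerivAt_right hφ.intervalIntegrable
    continuous_gaussianPDFReal_zero_one.stronglyMeasurable.stronglyMeasurableAtFilter
    continuous_gaussianPDFReal_zero_one.continuousAt).const_add _

theorem continuous_stdNormalCDF : Continuous stdNormalCDF :=
  continuous_iff_continuousAt.mpr fun x => (hasDerivAt_stdNormalCDF x).continuousAt

theorem stdNormalCDF_pos (y : ℝ) : 0 < stdNormalCDF y :=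
  calc 0 ≤ stdNormalCDF (y - 1) := ENNReal.toReal_nonneg
    _ < stdNormalCDF y := strictMono_of_hasDerivAt_pos hasDerivAt_stdNormalCDF
        (fun x => gaussianPDFReal_pos 0 1 x one_ne_zero) (by linarith)

theorem stdNormalCDF_le_one (y : ℝ) : stdNormalCDF y ≤ 1 :=
  ENNReal.toReal_le_of_le_ofReal zero_le_one (by simpa using prob_le_one)

theorem eq_one_of_eventually_stdNormalCDF_eq_mul {u v s w k t₀ : ℝ} (hk : 0 < k) (hw : 0 < w)
    (h : ∀ᶠ t in 𝓝 t₀, stdNormalCDF (u + s * t) = k * stdNormalCDF (v + w * t)) : k = 1 := by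
  set φ := gaussianPDFReal 0 1
  have hφ : ∀ x, 0 < φ x := fun x => gaussianPDFReal_pos 0 1 x one_ne_zero
  have h₁ : ∀ᶠ t in 𝓝 t₀, s * φ (u + s * t) = k * (w * φ (v + w * t)) :=
    eventuallyEq_of_hasDerivAt (hasDerivAt_comp_affine hasDerivAt_stdNormalCDF u s)
      (fun t => (hasDerivAt_comp_affine hasDerivAt_stdNormalCDF v w t).const_mul k) h
  have h₂ : ∀ᶠ t in 𝓝 t₀, s * (s * (-(u + s * t) * φ (u + s * t)))
      = k * (w * (w * (-(v + w * t) * φ (v + w * t)))) :=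
    eventuallyEq_of_hasDerivAt
      (fun t => (hasDerivAt_comp_affine hasDerivAt_gaussianPDFReal_zero_one u s t).const_mul s)
      (fun t => ((hasDerivAt_comp_affine hasDerivAt_gaussianPDFReal_zero_one v w t).const_mul
        w).const_mul k) h₁
  have hs : 0 < s := by
    obtain ⟨t, ht⟩ := h₁.exists
    have : 0 < s * φ (u + s * t) := ht ▸ mul_pos hk (mul_pos hw (hφ _))
    exact pos_of_mul_pos_left this (hφ _).le
  -- dividing the second derivative by the first leaves an affine identity in `t`
  have h₃ : ∀ᶠ t in 𝓝 t₀, s * (u + s * t) = w * (v + w * t) := by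
    filter_upwards [h₁, h₂] with t ht₁ ht₂
    have : (s * (u + s * t)) * (s * φ (u + s * t)) = (w * (v + w * t)) * (s * φ (u + s * t)) := by
      linear_combination -ht₂ - (w * (v + w * t)) * ht₁
    exact mul_right_cancel₀ (mul_pos hs (hφ _)).ne' this
  have h₄ : ∀ᶠ t in 𝓝 t₀, s * (s * 1) = w * (w * 1) := eventuallyEq_of_hasDerivAt
    (fun t => (hasDerivAt_comp_affine hasDerivAt_id' u s t).const_mul s)
    (fun t => (hasDerivAt_comp_affine hasDerivAt_id' v w t).const_mul w) h₃
  obtain ⟨t, ht, ht₃, ht₄⟩ := (h.and (h₃.and h₄)).exists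
  obtain rfl : s = w := by nlinarith
  obtain rfl : u = v := mul_left_cancel₀ hs.ne' (by linarith)
  exact (mul_eq_right₀ (stdNormalCDF_pos _).ne').mp ht.symm

def logistic (t : ℝ) : ℝ := (1 + rexp (-t))⁻¹

theorem logistic_pos (t : ℝ) : 0 < logistic t := by
  unfold logistic
  positivity

theorem logistic_le_one (t : ℝ) : logistic t ≤ 1 :=
  inv_le_one_of_one_le₀ (le_add_of_nonneg_right (exp_pos _).le)

theorem continuous_logistic : Continuous logistic :=
  (continuous_const.add (continuous_exp.comp continuous_neg)).inv₀ fun _ =>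
    (add_pos one_pos (exp_pos _)).ne'

theorem hasDerivAt_exp_neg (x : ℝ) : HasDerivAt (fun x => rexp (-x)) (-rexp (-x)) x := by
  simpa using (hasDerivAt_neg x).exp

theorem eq_one_of_eventually_logistic_eq_mul {u v s w k t₀ : ℝ} (hw : 0 < w)
    (h : ∀ᶠ t in 𝓝 t₀, logistic (u + s * t) = k * logistic (v + w * t)) : k = 1 := by
  have h₀ : ∀ᶠ t in 𝓝 t₀, 1 + rexp (-(v + w * t)) = k * (1 + rexp (-(u + s * t))) := by
    filter_upwards [h] with t ht
    rw [logistic, logistic, ← div_eq_mul_inv, inv_eq_one_div,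
      div_eq_div_iff (by positivity) (by positivity)] at ht
    linear_combination ht
  have h₁ : ∀ᶠ t in 𝓝 t₀, w * -rexp (-(v + w * t)) = k * (s * -rexp (-(u + s * t))) :=
    eventuallyEq_of_hasDerivAt
      (fun t => (hasDerivAt_comp_affine hasDerivAt_exp_neg v w t).const_add 1)
      (fun t => ((hasDerivAt_comp_affine hasDerivAt_exp_neg u s t).const_add 1).const_mul k) h₀
  have h₂ : ∀ᶠ t in 𝓝 t₀,
      w * -(w * -rexp (-(v + w * t))) = k * (s * -(s * -rexp (-(u + s * t)))) :=
    eventuallyEq_of_hasDerivAt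
      (fun t => (hasDerivAt_comp_affine hasDerivAt_exp_neg v w t).neg.const_mul w)
      (fun t => ((hasDerivAt_comp_affine hasDerivAt_exp_neg u s t).neg.const_mul s).const_mul k) h₁
  obtain ⟨t, ht₀, ht₁, ht₂⟩ := (h₀.and (h₁.and h₂)).exists
  set A := rexp (-(u + s * t))
  have hB : 0 < rexp (-(v + w * t)) := exp_pos _
  set B := rexp (-(v + w * t))
  obtain rfl : s = w := by
    refine (mul_right_cancel₀ (mul_pos hw hB).ne' ?_).symm
    linear_combination ht₂ + s * ht₁
  have hAB : k * A = B := mul_left_cancel₀ hw.ne' (by linear_combination ht₁)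
  linear_combination -ht₀ - hAB

theorem continuous_and_pos_and_le_one_of_link {g : ℝ → ℝ}
    (hg : g = logistic ∨ g = stdNormalCDF) : Continuous g ∧ (∀ t, 0 < g t) ∧ ∀ t, g t ≤ 1 := by
  rcases hg with rfl | rfl
  · exact ⟨continuous_logistic, logistic_pos, logistic_le_one⟩
  · exact ⟨continuous_stdNormalCDF, stdNormalCDF_pos, stdNormalCDF_le_one⟩

theorem eq_one_of_eventually_link_eq_mul {g : ℝ → ℝ} (hg : g = logistic ∨ g = stdNormalCDF)
    {u v s w k t₀ : ℝ} (hk : 0 < k) (hw : 0 < w)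
    (h : ∀ᶠ t in 𝓝 t₀, g (u + s * t) = k * g (v + w * t)) : k = 1 := by
  rcases hg with rfl | rfl
  · exact eq_one_of_eventually_logistic_eq_mul hw h
  · exact eq_one_of_eventually_stdNormalCDF_eq_mul hk hw h

end Links

theorem EuclideanSpace.sum_mul_eq_inner {ι : Type*} [Fintype ι] (x y : EuclideanSpace ℝ ι) :
    ∑ i, x i * y i = inner ℝ x y := by
  simp [PiLp.inner_apply, mul_comm]

theorem stmt_6_general {p₁ p₂ : ℕ}
    (m : Measure (EuclideanSpace ℝ (Fin p₁) × EuclideanSpace ℝ (Fin p₂)))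
    [IsProbabilityMeasure m]
    (xtilde : EuclideanSpace ℝ (Fin p₁)) (hatom : 0 < m.fst {xtilde})
    (𝒳₂' : Set (EuclideanSpace ℝ (Fin p₂))) (h𝒳₂ne : 𝒳₂'.Nonempty)
    (h𝒳₂open : IsOpen 𝒳₂')
    (hcond : ∀ (z : EuclideanSpace ℝ (Fin p₂)) (r : ℝ), 0 < r →
      Metric.ball z r ⊆ 𝒳₂' → 0 < (m.condKernel xtilde) (Metric.ball z r))
    (g : ℝ → ℝ)
    (hg : (∀ t, g t = (1 + Real.exp (-t))⁻¹) ∨ (∀ t, g t = stdNormalCDF t))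
    (F0 F1star F1 : ℝ → ℝ)
    (hne : F0 ≠ F1star)
    (β₀star : ℝ) (β₁star : EuclideanSpace ℝ (Fin p₁))
    (β₂star : EuclideanSpace ℝ (Fin p₂)) (hβ₂star : β₂star ≠ 0)
    (πstar : EuclideanSpace ℝ (Fin p₁) × EuclideanSpace ℝ (Fin p₂) → ℝ)
    (hπstar : ∀ x, πstar x
      = g (β₀star + (∑ i, β₁star i * x.1 i) + ∑ j, β₂star j * x.2 j))
    (β₀ : ℝ) (β₁ : EuclideanSpace ℝ (Fin p₁)) (β₂ : EuclideanSpace ℝ (Fin p₂))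
    (π : EuclideanSpace ℝ (Fin p₁) × EuclideanSpace ℝ (Fin p₂) → ℝ)
    (hπ : ∀ x, π x = g (β₀ + (∑ i, β₁ i * x.1 i) + ∑ j, β₂ j * x.2 j))
    (heq : JointEq m F0 πstar F1star π F1) :
    (∀ᵐ x ∂m, π x = πstar x) ∧ F1 = F1star := by
  have hlink : g = logistic ∨ g = stdNormalCDF := hg.imp funext funext
  obtain ⟨hg_cont, hg_pos, hg_le⟩ := continuous_and_pos_and_le_one_of_link hlink
  simp only [EuclideanSpace.sum_mul_eq_inner] at hπstar hπ
  have hπstar_cont : Continuous πstar := by rw [funext hπstar]; fun_prop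
  have hπ_cont : Continuous π := by rw [funext hπ]; fun_prop
  have hπstar_pos : ∀ x, 0 < πstar x := fun x => hπstar x ▸ hg_pos _
  have hπ_pos : ∀ x, 0 < π x := fun x => hπ x ▸ hg_pos _
  have hint : ∀ f : _ → ℝ, Continuous f → (∀ x, 0 < f x) → (∀ x, f x ≤ 1) → Integrable f m :=
    fun f hf hpos hle => .of_bound hf.aestronglyMeasurable 1
      (ae_of_all _ fun x => abs_le.mpr ⟨by linarith [hpos x], hle x⟩)
  obtain ⟨k, hk, hπk, hF⟩ := exists_pos_ae_eq_mul_of_ae_mul_eq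
    (c := fun y => F1star y - F0 y) (d := fun y => F1 y - F0 y) hπstar_pos hπ_pos
    (fun h => hne (funext fun y => (sub_eq_zero.mp (congrFun h y)).symm))
    (heq.ae_mul_sub_eq (hint _ hπstar_cont hπstar_pos fun x => hπstar x ▸ hg_le _)
      (hint _ hπ_cont hπ_pos fun x => hπ x ▸ hg_le _))
  have hU : EqOn (fun z => π (xtilde, z)) (fun z => k * πstar (xtilde, z)) 𝒳₂' :=
    Continuous.eqOn_of_ae_eq_of_forall_ball_pos (by fun_prop) (by fun_prop) h𝒳₂open hcond
      (ae_condKernel_of_ae hπk hatom.ne')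
  obtain ⟨z₀, hz₀⟩ := h𝒳₂ne
  have hline : ∀ᶠ t in 𝓝 (0 : ℝ), z₀ + t • β₂star ∈ 𝒳₂' :=
    (Continuous.tendsto (f := fun t : ℝ => z₀ + t • β₂star) (by fun_prop) 0)
      (by simpa using h𝒳₂open.mem_nhds hz₀)
  obtain rfl : k = 1 := eq_one_of_eventually_link_eq_mul hlink hk
    (u := β₀ + inner ℝ β₁ xtilde + inner ℝ β₂ z₀) (s := inner ℝ β₂ β₂star)
    (v := β₀star + inner ℝ β₁star xtilde + inner ℝ β₂star z₀) (w := ‖β₂star‖ ^ 2)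
    (by positivity) (hline.mono fun t ht => by
      have := hU ht
      simp only [hπ, hπstar, inner_add_right, inner_smul_right, real_inner_self_eq_norm_sq] at this
      simpa only [← add_assoc, mul_comm] using this)
  refine ⟨by simpa using hπk, funext fun y => ?_⟩
  linarith [hF y]

/-- Corollary `revide`: identifiability in the covariate model with mixed
discrete/continuous covariates.  The covariate distribution `m` on `𝒳₁ × 𝒳₂` has a countably
supported first marginal; at some atom `x̃₁` of the first marginal, the conditional
distribution `m_{2|1}(·, x̃₁)` charges every open ball contained in a nonempty open set
`𝒳₂'`.  If `g` is the logistic or probit link, `F₀ ≠ F₁*`, `F₁* ∈ ℱ_Gauss` or `ℱ_↓`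
(together with the competing `F₁` in the same class), and `β₂* ≠ 0`, then `P_{(π*,F₁*)}`
is identifiable. -/
theorem stmt_6 {p₁ p₂ : ℕ}
    (m : Measure (EuclideanSpace ℝ (Fin p₁) × EuclideanSpace ℝ (Fin p₂)))
    [IsProbabilityMeasure m]
    (S : Set (EuclideanSpace ℝ (Fin p₁))) (hSc : S.Countable) (hSne : S.Nonempty)
    (hSsupp : m.fst Sᶜ = 0)
    (xtilde : EuclideanSpace ℝ (Fin p₁)) (hatom : 0 < m.fst {xtilde})
    (𝒳₂' : Set (EuclideanSpace ℝ (Fin p₂))) (h𝒳₂ne : 𝒳₂'.Nonempty)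
    (h𝒳₂open : IsOpen 𝒳₂')
    (hcond : ∀ (z : EuclideanSpace ℝ (Fin p₂)) (r : ℝ), 0 < r →
      Metric.ball z r ⊆ 𝒳₂' → 0 < (m.condKernel xtilde) (Metric.ball z r))
    (g : ℝ → ℝ)
    (hg : (∀ t, g t = (1 + Real.exp (-t))⁻¹) ∨ (∀ t, g t = stdNormalCDF t))
    (F0 F1star F1 : ℝ → ℝ)
    (hclass : (IsGaussMixCDF F1star ∧ IsGaussMixCDF F1) ∨
      (IsDecDensityDF F1star ∧ IsDecDensityDF F1))
    (hne : F0 ≠ F1star)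
    (β₀star : ℝ) (β₁star : EuclideanSpace ℝ (Fin p₁))
    (β₂star : EuclideanSpace ℝ (Fin p₂)) (hβ₂star : β₂star ≠ 0)
    (πstar : EuclideanSpace ℝ (Fin p₁) × EuclideanSpace ℝ (Fin p₂) → ℝ)
    (hπstar : ∀ x, πstar x
      = g (β₀star + (∑ i, β₁star i * x.1 i) + ∑ j, β₂star j * x.2 j))
    (β₀ : ℝ) (β₁ : EuclideanSpace ℝ (Fin p₁)) (β₂ : EuclideanSpace ℝ (Fin p₂))
    (π : EuclideanSpace ℝ (Fin p₁) × EuclideanSpace ℝ (Fin p₂) → ℝ)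
    (hπ : ∀ x, π x = g (β₀ + (∑ i, β₁ i * x.1 i) + ∑ j, β₂ j * x.2 j))
    (heq : JointEq m F0 πstar F1star π F1) :
    (∀ᵐ x ∂m, π x = πstar x) ∧ F1 = F1star :=
  stmt_6_general m xtilde hatom 𝒳₂' h𝒳₂ne h𝒳₂open hcond g hg F0 F1star F1 hne β₀star β₁star β₂star
    hβ₂star πstar hπstar β₀ β₁ β₂ π hπ heq
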